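/- arXiv:2211.04914 — 2 statements merged into one kernel-verified Lean document; each statement's English description precedes it below -/
import Mathlib

section
/- For every n >= 0 there is an explicit bijection phi between the set of GDAP of length n bounded between y = -1 and y = 1 and the set of compositions of n + 3 whose first part is odd, whose last part is even, and in which no two consecutive parts have the same parity. -/
open PowerSeries

/-- A valid step sequence: each step is an up-step `1` or a down-step `-k` (`k ≥ 1`),
and no two down-steps are consecutive. -/
def GoodSteps (p : List ℤ) : Prop :=
  (∀ s ∈ p, s = 1 ∨ s ≤ -1) ∧ List.Chain' (fun a b => a = 1 ∨ b = 1) p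

/-- A Dyck path with air pockets: nonempty, valid steps, ends on the x-axis,
stays weakly above the x-axis. -/
def IsDAP (p : List ℤ) : Prop :=
  p ≠ [] ∧ GoodSteps p ∧ p.sum = 0 ∧ ∀ i, 0 ≤ (p.take i).sum

/-- A grand Dyck path with air pockets: valid steps, ends on the x-axis
(possibly going below it); the empty path is allowed. -/
def IsGDAP (p : List ℤ) : Prop := GoodSteps p ∧ p.sum = 0

/-- Number of DAP of length `n`. -/
noncomputable def dapCount (n : ℕ) : ℕ :=
  Nat.card {p : List ℤ // IsDAP p ∧ p.length = n}

/-- All points of the path have ordinate in `[-1,1]`. -/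
def Bounded11 (p : List ℤ) : Prop := ∀ i, -1 ≤ (p.take i).sum ∧ (p.take i).sum ≤ 1

/-- `c` is a composition of `m`. -/
def IsComposition (c : List ℕ) (m : ℕ) : Prop := (∀ x ∈ c, 0 < x) ∧ c.sum = m

/-- No two consecutive parts have the same parity. -/
def AltParity (c : List ℕ) : Prop := List.Chain' (fun a b => a % 2 ≠ b % 2) c

/-!
A GDAP staying between `y = -1` and `y = 1` returns to the axis every two or three steps, so it
is a word in `C = D₁U`, `A = UD₁` and `B = UD₂U`, in which `A` is never followed by `C` (that
would be two consecutive down-steps). Such a word is a sequence of runs `CᵃAᵇ` separated by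
single `B`'s, i.e. a nonempty list of pairs `(a, b)`. Sending each run to the two parts
`2a + 1, 2b + 2` gives the compositions in question: a word with `k` runs has length
`n = ∑ (2a + 2b) + 3 (k - 1)`, so the parts sum to `n + 3`.
-/

def IsBoundedGDAP (p : List ℤ) : Prop := IsGDAP p ∧ Bounded11 p

lemma goodSteps_iff {p : List ℤ} :
    GoodSteps p ↔ (∀ s ∈ p, s = 1 ∨ s ≤ -1) ∧ p.IsChain (fun a b => a = 1 ∨ b = 1) :=
  Iff.rfl

lemma altParity_iff {c : List ℕ} : AltParity c ↔ c.IsChain (fun a b => a % 2 ≠ b % 2) :=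
  Iff.rfl

lemma goodSteps_append {p q : List ℤ} :
    GoodSteps (p ++ q) ↔
      GoodSteps p ∧ GoodSteps q ∧ ∀ x ∈ p.getLast?, ∀ y ∈ q.head?, x = 1 ∨ y = 1 := by
  simp only [goodSteps_iff, List.isChain_append, List.mem_append]
  grind

lemma bounded11_append {p q : List ℤ} (hp : Bounded11 p) (hsum : p.sum = 0) :
    Bounded11 (p ++ q) ↔ Bounded11 q := by
  constructor
  · intro h i
    simpa [List.take_append, List.take_of_length_le (Nat.le_add_right _ i), hsum]
      using h (p.length + i)
  · intro hq i
    rw [List.take_append, List.sum_append]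
    rcases le_or_gt i p.length with hi | hi
    · simpa [Nat.sub_eq_zero_of_le hi] using hp i
    · simpa [List.take_of_length_le hi.le, hsum] using hq (i - p.length)

lemma isBoundedGDAP_nil : IsBoundedGDAP [] :=
  ⟨⟨⟨by simp, List.isChain_nil⟩, rfl⟩, fun i => by simp⟩

lemma isBoundedGDAP_append {p q : List ℤ} (hp : IsBoundedGDAP p) :
    IsBoundedGDAP (p ++ q) ↔
      IsBoundedGDAP q ∧ ∀ x ∈ p.getLast?, ∀ y ∈ q.head?, x = 1 ∨ y = 1 := by
  obtain ⟨⟨hgood, hsum⟩, hb⟩ := hp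
  simp only [IsBoundedGDAP, IsGDAP, goodSteps_append, List.sum_append, hsum, zero_add,
    bounded11_append hb hsum, hgood, true_and]
  tauto

lemma isBoundedGDAP_pieces :
    IsBoundedGDAP [-1, 1] ∧ IsBoundedGDAP [1, -1] ∧ IsBoundedGDAP [1, -2, 1] := by
  refine ⟨⟨⟨?_, rfl⟩, ?_⟩, ⟨⟨?_, rfl⟩, ?_⟩, ⟨⟨?_, rfl⟩, ?_⟩⟩ <;>
    first
    | simp [goodSteps_iff]
    | intro i; rcases i with _ | _ | _ | i <;> simp

lemma isBoundedGDAP_down_up_cons {q : List ℤ} : IsBoundedGDAP (-1 :: 1 :: q) ↔ IsBoundedGDAP q := by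
  simpa using isBoundedGDAP_append (q := q) isBoundedGDAP_pieces.1

lemma isBoundedGDAP_up_down_cons {q : List ℤ} :
    IsBoundedGDAP (1 :: -1 :: q) ↔ IsBoundedGDAP q ∧ ∀ y ∈ q.head?, y = 1 := by
  simpa using isBoundedGDAP_append (q := q) isBoundedGDAP_pieces.2.1

lemma isBoundedGDAP_up_down₂_up_cons {q : List ℤ} : IsBoundedGDAP (1 :: -2 :: 1 :: q) ↔ IsBoundedGDAP q := by
  simpa using isBoundedGDAP_append (q := q) isBoundedGDAP_pieces.2.2

lemma IsBoundedGDAP.eq_nil_or_cons {p : List ℤ} (hp : IsBoundedGDAP p) :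
    p = [] ∨ ∃ q, p = -1 :: 1 :: q ∨ p = 1 :: -1 :: q ∨ p = 1 :: -2 :: 1 :: q := by
  obtain ⟨⟨⟨hsteps, hchain⟩, hsum⟩, hb⟩ := hp
  rcases p with _ | ⟨s, _ | ⟨t, q⟩⟩
  · exact Or.inl rfl
  · have := hsteps s (by simp)
    simp at hsum; omega
  right
  have hs := hsteps s (by simp)
  have ht := hsteps t (by simp)
  have hst := (List.isChain_cons_cons.mp hchain).1
  have h1 := hb 1
  have h2 := hb 2
  simp only [List.take_succ_cons, List.take_zero, List.sum_cons, List.sum_nil] at h1 h2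
  obtain ⟨rfl, rfl⟩ | ⟨rfl, rfl⟩ | ⟨rfl, rfl⟩ :
      (s = -1 ∧ t = 1) ∨ (s = 1 ∧ t = -1) ∨ (s = 1 ∧ t = -2) := by omega
  · exact ⟨q, Or.inl rfl⟩
  · exact ⟨q, Or.inr (Or.inl rfl)⟩
  rcases q with _ | ⟨u, q⟩
  · simp at hsum
  have hu := (List.isChain_cons_cons.mp (List.isChain_cons_cons.mp hchain).2).1
  obtain rfl : u = 1 := by omega
  exact ⟨q, Or.inr (Or.inr rfl)⟩

namespace Runs

def segment : ℕ → ℕ → List ℤ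
  | a + 1, b => -1 :: 1 :: segment a b
  | 0, b + 1 => 1 :: -1 :: segment 0 b
  | 0, 0 => []

def toPath (l : List (ℕ × ℕ)) : List ℤ :=
  [1, -2, 1].intercalate (l.map fun x => segment x.1 x.2)

/-- The catch-all `[(0, 0)]` is the image of `[]`; on other paths it is junk, chosen so that
`ofPath` never returns `[]`. -/
def ofPath : List ℤ → List (ℕ × ℕ)
  | -1 :: 1 :: p => (ofPath p).modifyHead fun x => (x.1 + 1, x.2)
  | 1 :: -1 :: p => (ofPath p).modifyHead fun x => (x.1, x.2 + 1)
  | 1 :: -2 :: 1 :: p => (0, 0) :: ofPath p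
  | _ => [(0, 0)]

variable {a b : ℕ} {x : ℕ × ℕ} {r : List (ℕ × ℕ)}

@[simp] lemma toPath_singleton_zero : toPath [(0, 0)] = [] := by simp [toPath, segment]

@[simp] lemma toPath_succ_fst : toPath ((a + 1, b) :: r) = -1 :: 1 :: toPath ((a, b) :: r) := by
  simp [toPath, segment]

@[simp] lemma toPath_succ_snd : toPath ((0, b + 1) :: r) = 1 :: -1 :: toPath ((0, b) :: r) := by
  simp [toPath, segment]

@[simp] lemma toPath_zero_cons : toPath ((0, 0) :: x :: r) = 1 :: -2 :: 1 :: toPath (x :: r) := by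
  simp [toPath, segment]

@[elab_as_elim]
lemma induction_ne_nil {motive : List (ℕ × ℕ) → Prop} (zero : motive [(0, 0)])
    (succ_fst : ∀ a b r, motive ((a, b) :: r) → motive ((a + 1, b) :: r))
    (succ_snd : ∀ b r, motive ((0, b) :: r) → motive ((0, b + 1) :: r))
    (zero_cons : ∀ x r, motive (x :: r) → motive ((0, 0) :: x :: r)) :
    ∀ l, l ≠ [] → motive l
  | (a + 1, b) :: r, _ =>
    succ_fst a b r (induction_ne_nil zero succ_fst succ_snd zero_cons _ (List.cons_ne_nil _ _))
  | (0, b + 1) :: r, _ =>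
    succ_snd b r (induction_ne_nil zero succ_fst succ_snd zero_cons _ (List.cons_ne_nil _ _))
  | [(0, 0)], _ => zero
  | (0, 0) :: x :: r, _ =>
    zero_cons x r (induction_ne_nil zero succ_fst succ_snd zero_cons _ (List.cons_ne_nil _ _))

lemma ofPath_toPath : ∀ l, l ≠ [] → ofPath (toPath l) = l := by
  refine induction_ne_nil ?_ ?_ ?_ ?_ <;> intros <;> simp_all [ofPath]

lemma ofPath_ne_nil (p : List ℤ) : ofPath p ≠ [] := by
  induction p using ofPath.induct <;> simp_all [ofPath]

lemma head?_toPath_zero_fst : ∀ y ∈ (toPath ((0, b) :: r)).head?, y = 1 := by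
  cases b with
  | succ b => simp
  | zero => cases r <;> simp

lemma isBoundedGDAP_toPath : ∀ l, l ≠ [] → IsBoundedGDAP (toPath l) := by
  refine induction_ne_nil ?_ ?_ ?_ ?_
  · simpa using isBoundedGDAP_nil
  · intro a b r ih
    rwa [toPath_succ_fst, isBoundedGDAP_down_up_cons]
  · intro b r ih
    rw [toPath_succ_snd, isBoundedGDAP_up_down_cons]
    exact ⟨ih, head?_toPath_zero_fst⟩
  · intro x r ih
    rwa [toPath_zero_cons, isBoundedGDAP_up_down₂_up_cons]

lemma toPath_ofPath {p : List ℤ} (hp : IsBoundedGDAP p) : toPath (ofPath p) = p := by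
  induction p using ofPath.induct with
  | case1 p ih =>
    obtain ⟨⟨a, b⟩, r, hr⟩ := List.exists_cons_of_ne_nil (ofPath_ne_nil p)
    rw [isBoundedGDAP_down_up_cons] at hp
    rw [ofPath, hr, List.modifyHead_cons, toPath_succ_fst, ← hr, ih hp]
  | case2 p ih =>
    obtain ⟨⟨a, b⟩, r, hr⟩ := List.exists_cons_of_ne_nil (ofPath_ne_nil p)
    rw [isBoundedGDAP_up_down_cons] at hp
    have hpath := ih hp.1
    rw [hr] at hpath
    cases a with
    | succ a =>
      rw [toPath_succ_fst] at hpath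
      simpa [← hpath] using hp.2
    | zero => rw [ofPath, hr, List.modifyHead_cons, toPath_succ_snd, hpath]
  | case3 p ih =>
    rw [isBoundedGDAP_up_down₂_up_cons] at hp
    obtain ⟨x, r, hr⟩ := List.exists_cons_of_ne_nil (ofPath_ne_nil p)
    rw [ofPath, hr, toPath_zero_cons, ← hr, ih hp]
  | case4 p h₁ h₂ h₃ =>
    rcases hp.eq_nil_or_cons with rfl | ⟨q, h | h | h⟩
    · simp [ofPath]
    · exact (h₁ q h).elim
    · exact (h₂ q h).elim
    · exact (h₃ q h).elim

def toComposition : List (ℕ × ℕ) → List ℕ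
  | [] => []
  | (a, b) :: r => (2 * a + 1) :: (2 * b + 2) :: toComposition r

def ofComposition : List ℕ → List (ℕ × ℕ)
  | o :: e :: c => (o / 2, e / 2 - 1) :: ofComposition c
  | _ => []

lemma ofComposition_toComposition (l : List (ℕ × ℕ)) : ofComposition (toComposition l) = l := by
  induction l with
  | nil => rfl
  | cons x r ih => simp [toComposition, ofComposition, ih, Prod.ext_iff]; omega

lemma pos_of_mem_toComposition : ∀ l, ∀ x ∈ toComposition l, 0 < x
  | [] => by simp [toComposition]
  | (a, b) :: r => by
    simpa [toComposition] using pos_of_mem_toComposition r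

lemma altParity_toComposition : ∀ l, AltParity (toComposition l)
  | [] => List.isChain_nil
  | [(a, b)] => by simp [altParity_iff, toComposition]
  | (a, b) :: (c, d) :: r => by
    have := altParity_toComposition ((c, d) :: r)
    simp_all [altParity_iff, toComposition]

lemma head?_toComposition {l : List (ℕ × ℕ)} (hl : l ≠ []) :
    ∃ h, (toComposition l).head? = some h ∧ Odd h := by
  obtain ⟨⟨a, b⟩, r, rfl⟩ := List.exists_cons_of_ne_nil hl
  exact ⟨2 * a + 1, rfl, odd_two_mul_add_one a⟩

lemma getLast?_toComposition : ∀ l : List (ℕ × ℕ), l ≠ [] →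
    ∃ e, (toComposition l).getLast? = some e ∧ Even e
  | [(a, b)], _ => ⟨2 * b + 2, rfl, ⟨b + 1, by ring⟩⟩
  | (a, b) :: x :: r, _ => by
    simpa [toComposition] using getLast?_toComposition (x :: r) (List.cons_ne_nil _ _)

lemma sum_toComposition : ∀ l, l ≠ [] → (toComposition l).sum = (toPath l).length + 3 := by
  refine induction_ne_nil ?_ ?_ ?_ ?_ <;> intros <;> simp_all [toComposition] <;> omega

lemma toComposition_ofComposition {c : List ℕ} (hpos : ∀ x ∈ c, 0 < x) (halt : AltParity c)
    (hhead : ∃ h, c.head? = some h ∧ Odd h) (hlast : ∃ l, c.getLast? = some l ∧ Even l) :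
    toComposition (ofComposition c) = c := by
  induction c using ofComposition.induct with
  | case1 o e c ih =>
    rw [altParity_iff, List.isChain_cons_cons, List.isChain_cons] at halt
    obtain ⟨hoe, hec, halt⟩ := halt
    have ho : o % 2 = 1 := by
      obtain ⟨_, ⟨⟩, ho⟩ := hhead
      exact Nat.odd_iff.mp ho
    have he : 0 < e := hpos e (by simp)
    have hc : toComposition (ofComposition c) = c := by
      rcases c with _ | ⟨y, c⟩
      · rfl
      refine ih (fun x hx => hpos x (by simp [hx])) halt ⟨y, rfl, ?_⟩ (by simpa using hlast)
      exact Nat.odd_iff.mpr (by have := hec y rfl; omega)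
    simp only [ofComposition, toComposition, hc, List.cons.injEq, and_true]
    omega
  | case2 c h =>
    rcases c with _ | ⟨x, _ | ⟨e, c⟩⟩
    · simp at hhead
    · obtain ⟨_, hx, hodd⟩ := hhead
      obtain ⟨_, hx', heven⟩ := hlast
      simp only [List.head?_cons, List.getLast?_singleton, Option.some.injEq] at hx hx'
      subst hx hx'
      exact absurd heven (Nat.not_even_iff_odd.mpr hodd)
    · exact (h x e c rfl).elim

def pathEquiv (n : ℕ) :
    {l : List (ℕ × ℕ) // l ≠ [] ∧ (toPath l).length = n} ≃
      {p : List ℤ // IsGDAP p ∧ Bounded11 p ∧ p.length = n} where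
  toFun l :=
    ⟨toPath l, (isBoundedGDAP_toPath l.1 l.2.1).1, (isBoundedGDAP_toPath l.1 l.2.1).2, l.2.2⟩
  invFun p := ⟨ofPath p, ofPath_ne_nil p, by rw [toPath_ofPath ⟨p.2.1, p.2.2.1⟩, p.2.2.2]⟩
  left_inv l := Subtype.ext (ofPath_toPath l.1 l.2.1)
  right_inv p := Subtype.ext (toPath_ofPath ⟨p.2.1, p.2.2.1⟩)

def compositionEquiv (n : ℕ) :
    {l : List (ℕ × ℕ) // l ≠ [] ∧ (toPath l).length = n} ≃
      {c : List ℕ // IsComposition c (n + 3) ∧ AltParity c ∧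
        (∃ h, c.head? = some h ∧ Odd h) ∧ (∃ l, c.getLast? = some l ∧ Even l)} where
  toFun l :=
    ⟨toComposition l,
      ⟨pos_of_mem_toComposition l, by rw [sum_toComposition l.1 l.2.1, l.2.2]⟩,
      altParity_toComposition l, head?_toComposition l.2.1, getLast?_toComposition l.1 l.2.1⟩
  invFun c :=
    have hc := toComposition_ofComposition c.2.1.1 c.2.2.1 c.2.2.2.1 c.2.2.2.2
    have hne : ofComposition c.1 ≠ [] := fun h => by
      obtain ⟨x, hx, -⟩ := c.2.2.2.1
      rw [← hc, h] at hx
      simp [toComposition] at hx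
    ⟨ofComposition c, hne, by have := sum_toComposition _ hne; rw [hc, c.2.1.2] at this; omega⟩
  left_inv l := Subtype.ext (ofComposition_toComposition l)
  right_inv c := Subtype.ext (toComposition_ofComposition c.2.1.1 c.2.2.1 c.2.2.2.1 c.2.2.2.2)

end Runs

/-- for every `n ≥ 0` there is a bijection between GDAP of length `n`
bounded by `y = -1` and `y = 1` and compositions of `n+3` whose first part is odd, whose
last part is even, and with no two consecutive parts of the same parity. -/
theorem stmt16 : ∀ n : ℕ,
    Nonempty ({p : List ℤ // IsGDAP p ∧ Bounded11 p ∧ p.length = n} ≃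
      {c : List ℕ // IsComposition c (n + 3) ∧ AltParity c ∧
        (∃ h, c.head? = some h ∧ Odd h) ∧ (∃ l, c.getLast? = some l ∧ Even l)}) :=
  fun n => ⟨(Runs.pathEquiv n).symm.trans (Runs.compositionEquiv n)⟩
end

section
/- For the height-bounded generating functions B_k(x) of DAP in the class H with maximal height at most k, one has B_{k-1}(x) = ((1 - x^3 + x) B_k(x) - 1) / (x^2 B_k(x) + x) for all k >= 1, where B_0(x) = 1 and B_1(x) = 1/(1 - x^2). -/
open PowerSeries

/-- A prime DAP: a DAP ending with a down-step `D_k`, `k ≥ 2`, that returns to the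
x-axis only at its final point. -/
def IsPrimeDAP (p : List ℤ) : Prop :=
  IsDAP p ∧ (∃ d, p.getLast? = some d ∧ d ≤ -2) ∧
    ∀ i, 0 < i → i < p.length → 0 < (p.take i).sum

/-- The lowering map: `U β U D_k ↦ β U D_{k-1}`. -/
def lowerFun (p : List ℤ) : List ℤ := p.tail.dropLast ++ [p.getLastD 0 + 1]

/-- The maximal ordinate reached by the path. -/
def maxHeight (p : List ℤ) : ℤ :=
  (((List.range (p.length + 1)).map fun i => (p.take i).sum).foldr max 0)

/-- The class `H` of DAP (together with the empty path) with the special first return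
decomposition: `γ = α β` with `α` prime or `α = UD`, the lowering of `α` in `H` when
`α` is prime, `β ∈ H`, and `h(α) ≥ h(β)`. -/
inductive InH : List ℤ → Prop
  | empty : InH []
  | ud {β : List ℤ} : InH β → maxHeight β ≤ maxHeight [(1 : ℤ), -1] →
      InH ([(1 : ℤ), -1] ++ β)
  | prime {α β : List ℤ} : IsPrimeDAP α → InH (lowerFun α) → InH β →
      maxHeight β ≤ maxHeight α → InH (α ++ β)

/-- Number of paths of length `n` in the class `H`. -/
noncomputable def hCount (n : ℕ) : ℕ := Nat.card {p : List ℤ // InH p ∧ p.length = n}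

/-- `B_k(x)`: the generating function of paths in `H` of maximal height at most `k`. -/
noncomputable def Bk (k : ℕ) : PowerSeries ℚ :=
  PowerSeries.mk fun n =>
    (Nat.card {p : List ℤ // InH p ∧ p.length = n ∧ maxHeight p ≤ k} : ℚ)


lemma foldr_max_swap (L : List ℤ) (a c : ℤ) :
    max c (L.foldr max a) = max a (L.foldr max c) := by
  induction L with
  | nil => exact max_comm c a
  | cons x l ih =>
      simp only [List.foldr_cons]
      rw [max_left_comm, ih, max_left_comm]

lemma foldr_max_map_add (L : List ℤ) (x a : ℤ) :
    (L.map (x + ·)).foldr max (x + a) = x + L.foldr max a := by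
  induction L with
  | nil => rfl
  | cons y l ih => simp only [List.map_cons, List.foldr_cons, ih, max_add_add_left]

lemma le_foldr_max (L : List ℤ) (a : ℤ) : a ≤ L.foldr max a := by
  induction L with
  | nil => exact le_rfl
  | cons y l ih => exact le_max_of_le_right ih

@[simp] lemma mh_nil : maxHeight [] = 0 := by
  simp [maxHeight]

lemma mh_cons (x : ℤ) (l : List ℤ) : maxHeight (x :: l) = max 0 (x + maxHeight l) := by
  unfold maxHeight
  rw [List.range_succ_eq_map]
  simp only [List.map_cons, List.take_zero, List.sum_nil, List.map_map, List.foldr_cons,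
    List.length_cons]
  have h1 : ((List.range (l.length + 1)).map ((fun i => ((x :: l).take i).sum) ∘ Nat.succ))
      = ((List.range (l.length + 1)).map fun i => (l.take i).sum).map (x + ·) := by
    rw [List.map_map]
    apply List.map_congr_left
    intro i _
    simp [List.take_succ_cons]
  rw [h1]
  set B := (List.range (l.length + 1)).map fun i => (l.take i).sum with hB
  have hB0 : B = 0 :: (List.range l.length).map ((fun i => (l.take i).sum) ∘ Nat.succ) := by
    rw [hB, List.range_succ_eq_map]
    simp
  set M := (List.range l.length).map ((fun i => (l.take i).sum) ∘ Nat.succ) with hM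
  have hF : (0:ℤ) ≤ M.foldr max 0 := le_foldr_max M 0
  rw [hB0]
  simp only [List.map_cons, List.foldr_cons, add_zero]
  rw [foldr_max_swap _ 0 x]
  have : (M.map (x + ·)).foldr max x = x + M.foldr max 0 := by
    have := foldr_max_map_add M x 0
    rwa [add_zero] at this
  rw [this, max_eq_right hF, ← max_assoc, max_self]

lemma mh_nonneg (p : List ℤ) : 0 ≤ maxHeight p := by
  cases p with
  | nil => simp
  | cons x l => rw [mh_cons]; exact le_max_left _ _

lemma mh_append (a b : List ℤ) :
    maxHeight (a ++ b) = max (maxHeight a) (a.sum + maxHeight b) := by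
  induction a with
  | nil => simp [max_eq_right (mh_nonneg b)]
  | cons x l ih =>
      simp only [List.cons_append, mh_cons, ih, List.sum_cons]
      rw [← max_add_add_left, ← max_assoc, ← add_assoc]

lemma mh_singleton (x : ℤ) : maxHeight [x] = max 0 x := by
  rw [mh_cons, mh_nil, add_zero]

lemma sum_le_mh (p : List ℤ) : p.sum ≤ maxHeight p := by
  induction p with
  | nil => simp
  | cons x l ih =>
      rw [mh_cons, List.sum_cons]
      exact le_max_of_le_right (by omega)

lemma mh_take_le (p : List ℤ) (i : ℕ) : (p.take i).sum ≤ maxHeight p := by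
  calc (p.take i).sum ≤ maxHeight (p.take i) := sum_le_mh _
    _ ≤ maxHeight p := by
        conv_rhs => rw [← List.take_append_drop i p]
        rw [mh_append]
        exact le_max_left _ _

lemma mh_ud : maxHeight [(1:ℤ), -1] = 1 := by
  rw [mh_cons, mh_singleton]; norm_num

def raiseFun (q : List ℤ) : List ℤ := 1 :: (q.dropLast ++ [q.getLastD 0 - 1])

lemma dap_head {p : List ℤ} (h : IsDAP p) : ∃ l, p = 1 :: l := by
  obtain ⟨hne, ⟨hmem, -⟩, -, hpre⟩ := h
  obtain ⟨x, l, rfl⟩ := List.exists_cons_of_ne_nil hne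
  refine ⟨l, ?_⟩
  have h1 := hpre 1
  simp only [List.take_succ_cons, List.take_zero, List.sum_cons, List.sum_nil, add_zero] at h1
  have := hmem x (by simp)
  have hx : x = 1 := by omega
  rw [hx]

lemma dap_last {p : List ℤ} (h : IsDAP p) : ∃ m e, p = m ++ [e] ∧ e ≤ -1 := by
  obtain ⟨hne, ⟨hmem, -⟩, hsum, hpre⟩ := h
  refine ⟨p.dropLast, p.getLast hne, (List.dropLast_append_getLast hne).symm, ?_⟩
  have hmem' := hmem (p.getLast hne) (List.getLast_mem hne)
  rcases hmem' with h1 | h1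
  · exfalso
    have hp : p = p.dropLast ++ [p.getLast hne] := (List.dropLast_append_getLast hne).symm
    have hs : p.dropLast.sum + p.getLast hne = 0 := by
      rw [hp] at hsum; simpa using hsum
    have hdl : p.dropLast = p.take (p.length - 1) := p.dropLast_eq_take
    have := hpre (p.length - 1)
    rw [← hdl] at this
    omega
  · exact h1

lemma dap_append {a b : List ℤ} (ha : IsDAP a) (hb : IsDAP b) : IsDAP (a ++ b) := by
  obtain ⟨hne, ⟨hmem, hch⟩, hsum, hpre⟩ := ha
  obtain ⟨hne', ⟨hmem', hch'⟩, hsum', hpre'⟩ := hb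
  obtain ⟨lb, hlb⟩ := dap_head ⟨hne', ⟨hmem', hch'⟩, hsum', hpre'⟩
  refine ⟨by simp [hne], ⟨?_, ?_⟩, by simp [hsum, hsum'], ?_⟩
  · intro s hs
    rcases List.mem_append.1 hs with h | h
    exacts [hmem s h, hmem' s h]
  · rw [List.Chain', List.isChain_append]
    refine ⟨hch, hch', ?_⟩
    intro x hx y hy
    rw [hlb] at hy
    simp only [List.head?_cons, Option.mem_def, Option.some.injEq] at hy
    exact Or.inr hy.symm
  · intro i
    rcases le_or_gt i a.length with h | h
    · rw [List.take_append_of_le_length h]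
      exact hpre i
    · have : i = a.length + (i - a.length) := by omega
      rw [this, List.take_length_add_append]
      simp only [List.sum_append, hsum, zero_add]
      exact hpre' _

lemma inH_dap {p : List ℤ} (h : InH p) (hne : p ≠ []) : IsDAP p := by
  induction h with
  | empty => exact absurd rfl hne
  | @ud β hβ hle ih =>
      have hud : IsDAP [(1:ℤ), -1] := by
        refine ⟨by simp, ⟨?_, ?_⟩, by simp, ?_⟩
        · intro s hs; simp at hs; rcases hs with h|h <;> omega
        · exact List.isChain_pair.mpr (Or.inl rfl)
        · intro i
          match i with
          | 0 => simp
          | 1 => simp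
          | (n+2) => simp [List.take_succ_cons]
      rcases eq_or_ne β [] with rfl | hβne
      · simpa using hud
      · exact dap_append hud (ih hβne)
  | @prime α β hα hlow hβ hle ihl ihb =>
      rcases eq_or_ne β [] with rfl | hβne
      · simpa using hα.1
      · exact dap_append hα.1 (ihb hβne)

lemma inH_mh_pos {p : List ℤ} (h : InH p) (hne : p ≠ []) : 1 ≤ maxHeight p := by
  obtain ⟨l, rfl⟩ := dap_head (inH_dap h hne)
  rw [mh_cons]
  have := mh_nonneg l
  omega

lemma inH_sum {p : List ℤ} (h : InH p) : p.sum = 0 := by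
  rcases eq_or_ne p [] with rfl | hne
  · simp
  · exact (inH_dap h hne).2.2.1

lemma prime_shape {α : List ℤ} (h : IsPrimeDAP α) :
    ∃ m d, α = 1 :: m ++ [d] ∧ d ≤ -2 := by
  obtain ⟨hd, ⟨d, hlast, hd2⟩, hint⟩ := h
  obtain ⟨l, rfl⟩ := dap_head hd
  have hlne : l ≠ [] := by rintro rfl; simp at hlast; omega
  refine ⟨l.dropLast, d, ?_, hd2⟩
  have h1 : (1 :: l).getLast? = some (l.getLast hlne) := by
    rw [List.getLast?_eq_getLast (by simp), List.getLast_cons hlne]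
  rw [h1] at hlast
  have h2 : l.getLast hlne = d := by injection hlast
  rw [← h2]
  simp [List.dropLast_append_getLast hlne]

lemma lowerFun_eq (m : List ℤ) (d : ℤ) : lowerFun (1 :: m ++ [d]) = m ++ [d + 1] := by
  unfold lowerFun
  rw [List.getLastD_eq_getLast?, List.getLast?_concat, List.cons_append, List.tail_cons,
    List.dropLast_concat]
  rfl

lemma raiseFun_eq (m : List ℤ) (e : ℤ) : raiseFun (m ++ [e]) = 1 :: m ++ [e - 1] := by
  unfold raiseFun
  simp [List.dropLast_concat, List.getLast?_concat, List.getLastD_eq_getLast?]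

lemma lower_raise {q : List ℤ} (hq : q ≠ []) : lowerFun (raiseFun q) = q := by
  obtain ⟨m, e, rfl⟩ : ∃ m e, q = m ++ [e] := ⟨q.dropLast, q.getLast hq, (List.dropLast_append_getLast hq).symm⟩
  rw [raiseFun_eq, lowerFun_eq]
  simp

lemma raise_lower {α : List ℤ} (h : IsPrimeDAP α) : raiseFun (lowerFun α) = α := by
  obtain ⟨m, d, rfl, hd⟩ := prime_shape h
  rw [lowerFun_eq, raiseFun_eq]
  simp

lemma mh_concat_nonpos (m : List ℤ) (e : ℤ) (he : e ≤ 0) :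
    maxHeight (m ++ [e]) = max (maxHeight m) m.sum := by
  rw [mh_append, mh_singleton, max_eq_left he, add_zero]

lemma mh_one_cons_concat (m : List ℤ) (e : ℤ) (he : e ≤ 0) :
    maxHeight (1 :: m ++ [e]) = 1 + max (maxHeight m) m.sum := by
  rw [List.cons_append, mh_cons, mh_concat_nonpos m e he]
  have := mh_nonneg m
  rw [max_eq_right]
  omega

lemma mh_raise (m : List ℤ) (e : ℤ) (he : e ≤ -1) :
    maxHeight (raiseFun (m ++ [e])) = 1 + maxHeight (m ++ [e]) := by
  rw [raiseFun_eq, mh_one_cons_concat m (e-1) (by omega), mh_concat_nonpos m e (by omega)]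

lemma mh_lower {α : List ℤ} (h : IsPrimeDAP α) :
    maxHeight (lowerFun α) + 1 = maxHeight α := by
  obtain ⟨m, d, rfl, hd⟩ := prime_shape h
  rw [lowerFun_eq, mh_one_cons_concat m d (by omega), mh_concat_nonpos m (d+1) (by omega)]
  ring

lemma raise_prime {q : List ℤ} (h : InH q) (hne : q ≠ []) :
    IsPrimeDAP (raiseFun q) := by
  have hdap := inH_dap h hne
  obtain ⟨m, e, hq, he⟩ := dap_last hdap
  subst hq
  obtain ⟨-, ⟨hmem, hch⟩, hsum, hpre⟩ := hdap
  rw [raiseFun_eq]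
  have hlen : (1 :: m ++ [e - 1]).length = m.length + 2 := by simp
  have htake : ∀ j, j ≤ m.length → (List.take j (m ++ [e - 1])).sum = (List.take j (m ++ [e])).sum := by
    intro j hj
    rw [List.take_append_of_le_length hj, List.take_append_of_le_length hj]
  have hpos : ∀ i, 0 < i → i < (1 :: m ++ [e - 1]).length →
      0 < (List.take i (1 :: m ++ [e - 1])).sum := by
    intro i hi hilen
    obtain ⟨j, rfl⟩ : ∃ j, i = j + 1 := ⟨i - 1, by omega⟩
    rw [List.cons_append, List.take_succ_cons, List.sum_cons]
    rw [hlen] at hilen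
    have hj : j ≤ m.length := by omega
    rw [htake j hj]
    have := hpre j
    omega
  refine ⟨⟨by simp, ⟨?_, ?_⟩, ?_, ?_⟩, ⟨e - 1, ?_, by omega⟩, hpos⟩
  · intro s hs
    rw [List.cons_append, List.mem_cons, List.mem_append] at hs
    rcases hs with rfl | hs | hs
    · exact Or.inl rfl
    · exact hmem s (by simp [hs])
    · simp at hs
      omega
  · rw [List.cons_append, List.Chain', List.isChain_cons]
    constructor
    · intro y _; exact Or.inl rfl
    · rw [List.Chain', List.isChain_append] at hch; rw [List.isChain_append]
      refine ⟨hch.1, List.isChain_singleton _, ?_⟩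
      intro x hx y hy
      have h2 := hch.2.2 x hx e (by simp)
      exact Or.inl (h2.resolve_right (by omega))
  · simp only [List.cons_append, List.sum_cons, List.sum_append, List.sum_nil, add_zero] at hsum ⊢
    omega
  · intro i
    rcases Nat.eq_zero_or_pos i with rfl | hi
    · simp
    rcases lt_or_ge i (1 :: m ++ [e - 1]).length with hlt | hge
    · exact le_of_lt (hpos i hi hlt)
    · rw [List.take_of_length_le hge]
      simp only [List.cons_append, List.sum_cons, List.sum_append, List.sum_nil, add_zero] at hsum ⊢
      omega
  · exact List.getLast?_concat

lemma inH_mem_bound {p : List ℤ} (h : InH p) {x : ℤ} (hx : x ∈ p) :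
    -(p.length : ℤ) ≤ x ∧ x ≤ 1 := by
  have hdap := inH_dap h (List.ne_nil_of_mem hx)
  obtain ⟨-, ⟨hmem, -⟩, -, hpre⟩ := hdap
  constructor
  · obtain ⟨i, hi, rfl⟩ := List.mem_iff_getElem.mp hx
    have hs := List.sum_take_succ p i hi
    have h1 := hpre (i+1)
    have h2 : (p.take i).sum ≤ (i : ℤ) := by
      calc (p.take i).sum ≤ (p.take i).length • (1:ℤ) := by
            apply List.sum_le_card_nsmul
            intro x hxm
            have := hmem x (List.mem_of_mem_take hxm)
            omega
        _ ≤ (i : ℤ) := by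
            simp only [nsmul_eq_mul, mul_one]
            have := List.length_take_le i p
            exact_mod_cast Nat.cast_le.mpr this
    have hilen : (i:ℤ) ≤ (p.length:ℤ) := by exact_mod_cast le_of_lt hi
    omega
  · rcases hmem x hx with h1 | h1 <;> omega

lemma finInH (n : ℕ) : {p : List ℤ | InH p ∧ p.length = n}.Finite := by
  have hIcc : (Set.Icc (-(n:ℤ)) 1).Finite := Set.finite_Icc _ _
  haveI := hIcc.to_subtype
  have h1 : {l : List ↥(Set.Icc (-(n:ℤ)) 1) | l.length = n}.Finite := List.finite_length_eq _ n
  have h2 := h1.image (List.map (Subtype.val))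
  apply h2.subset
  rintro p ⟨hp, rfl⟩
  refine ⟨p.attach.map (fun x => ⟨x.1, ?_⟩), ?_, ?_⟩
  · have := inH_mem_bound hp x.2
    exact Set.mem_Icc.mpr this
  · simp
  · rw [List.map_map]
    simp

def HSset (n k : ℕ) : Set (List ℤ) := {p | InH p ∧ p.length = n ∧ maxHeight p ≤ (k:ℤ)}
def HEset (n k : ℕ) : Set (List ℤ) := {p | InH p ∧ p.length = n ∧ maxHeight p = (k:ℤ)}

lemma finHS (n k : ℕ) : (HSset n k).Finite :=
  (finInH n).subset fun p hp => ⟨hp.1, hp.2.1⟩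

lemma finHE (n k : ℕ) : (HEset n k).Finite :=
  (finInH n).subset fun p hp => ⟨hp.1, hp.2.1⟩

lemma coeff_Bk (n k : ℕ) : (PowerSeries.coeff n) (Bk k) = ((HSset n k).ncard : ℚ) := by
  rw [Bk, PowerSeries.coeff_mk]
  norm_num
  rfl

lemma hs_split (n k : ℕ) :
    (HSset n (k+1)).ncard = (HSset n k).ncard + (HEset n (k+1)).ncard := by
  have hU : HSset n (k+1) = HSset n k ∪ HEset n (k+1) := by
    ext p
    simp only [HSset, HEset, Set.mem_setOf_eq, Set.mem_union]
    constructor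
    · rintro ⟨h1, h2, h3⟩
      rcases le_or_gt (maxHeight p) (k:ℤ) with h | h
      · exact Or.inl ⟨h1, h2, h⟩
      · refine Or.inr ⟨h1, h2, ?_⟩
        push_cast at h3 ⊢
        omega
    · rintro (⟨h1, h2, h3⟩ | ⟨h1, h2, h3⟩) <;> refine ⟨h1, h2, ?_⟩ <;> push_cast at h3 ⊢ <;> omega
  rw [hU, Set.ncard_union_eq ?_ (finHS n k) (finHE n (k+1))]
  rw [Set.disjoint_left]
  rintro p ⟨-, -, h3⟩ ⟨-, -, h3'⟩
  rw [h3'] at h3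
  push_cast at h3
  omega

lemma inH_nil_of_mh_le_zero {p : List ℤ} (h : InH p) (hm : maxHeight p ≤ 0) : p = [] := by
  by_contra hne
  have := inH_mh_pos h hne
  omega

lemma Bk0 : Bk 0 = 1 := by
  ext n
  rw [coeff_Bk, PowerSeries.coeff_one]
  rcases eq_or_ne n 0 with rfl | hn
  · have : HSset 0 0 = {([] : List ℤ)} := by
      ext p
      simp only [HSset, Set.mem_setOf_eq, Set.mem_singleton_iff]
      constructor
      · rintro ⟨h1, -, h3⟩
        exact inH_nil_of_mh_le_zero h1 (by exact_mod_cast h3)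
      · rintro rfl
        exact ⟨InH.empty, rfl, by simp⟩
    simp [this]
  · have : HSset n 0 = ∅ := by
      ext p
      simp only [HSset, Set.mem_setOf_eq, Set.mem_empty_iff_false, iff_false]
      rintro ⟨h1, h2, h3⟩
      have := inH_nil_of_mh_le_zero h1 (by exact_mod_cast h3)
      subst this
      simp at h2
      exact hn h2.symm
    simp [this, hn]

def repUD : ℕ → List ℤ
  | 0 => []
  | (m+1) => [(1:ℤ), -1] ++ repUD m

lemma repUD_length (m : ℕ) : (repUD m).length = 2 * m := by
  induction m with
  | zero => rfl
  | succ m ih => simp [repUD, ih]; omega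

lemma repUD_mh (m : ℕ) : maxHeight (repUD m) ≤ 1 := by
  induction m with
  | zero => simp [repUD]
  | succ m ih =>
      rw [repUD, mh_append, mh_ud]
      simp only [List.sum_cons, List.sum_nil]
      rw [max_le_iff]
      constructor
      · norm_num
      · omega

lemma repUD_inH (m : ℕ) : InH (repUD m) := by
  induction m with
  | zero => exact InH.empty
  | succ m ih => exact InH.ud ih ((repUD_mh m).trans_eq mh_ud.symm)

lemma inH_mh_le_one {p : List ℤ} (h : InH p) : maxHeight p ≤ 1 → ∃ m, p = repUD m := by
  induction h with
  | empty => exact fun _ => ⟨0, rfl⟩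
  | @ud β hβ hle ih =>
      intro hmh
      obtain ⟨m, rfl⟩ := ih (hle.trans_eq mh_ud)
      exact ⟨m + 1, rfl⟩
  | @prime α β hα hlow hβ hle ihl ihb =>
      intro hmh
      exfalso
      obtain ⟨m, d, rfl, hd⟩ := prime_shape hα
      rw [mh_append, mh_one_cons_concat m d (by omega)] at hmh
      have h1 : (1 :: m ++ [d]).sum = 0 := hα.1.2.2.1
      simp only [List.cons_append, List.sum_cons, List.sum_append, List.sum_nil, add_zero] at h1
      have h2 := mh_nonneg m
      have h3 : (2:ℤ) ≤ 1 + max (maxHeight m) m.sum := by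
        have : (1:ℤ) ≤ m.sum := by omega
        have := le_max_right (maxHeight m) m.sum
        omega
      have := le_max_left (1 + max (maxHeight m) m.sum) ((1 :: m ++ [d]).sum + maxHeight β)
      omega

lemma prime_mh_two {α : List ℤ} (hα : IsPrimeDAP α) : 2 ≤ maxHeight α := by
  obtain ⟨m, d, rfl, hd⟩ := prime_shape hα
  rw [mh_one_cons_concat m d (by omega)]
  have h1 : (1 :: m ++ [d]).sum = 0 := hα.1.2.2.1
  simp only [List.cons_append, List.sum_cons, List.sum_append, List.sum_nil, add_zero] at h1
  have : (1:ℤ) ≤ m.sum := by omega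
  have := le_max_right (maxHeight m) m.sum
  omega

lemma hs1_card (n : ℕ) : (HSset n 1).ncard = if 2 ∣ n then 1 else 0 := by
  split_ifs with h
  · obtain ⟨m, rfl⟩ := h
    have : HSset (2*m) 1 = {repUD m} := by
      ext p
      simp only [HSset, Set.mem_setOf_eq, Set.mem_singleton_iff]
      constructor
      · rintro ⟨h1, h2, h3⟩
        obtain ⟨m', rfl⟩ := inH_mh_le_one h1 (by exact_mod_cast h3)
        rw [repUD_length] at h2
        have : m' = m := by omega
        rw [this]
      · rintro rfl
        exact ⟨repUD_inH m, repUD_length m, by exact_mod_cast repUD_mh m⟩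
    rw [this, Set.ncard_singleton]
  · have : HSset n 1 = ∅ := by
      ext p
      simp only [HSset, Set.mem_setOf_eq, Set.mem_empty_iff_false, iff_false]
      rintro ⟨h1, h2, h3⟩
      obtain ⟨m', rfl⟩ := inH_mh_le_one h1 (by exact_mod_cast h3)
      rw [repUD_length] at h2
      exact h ⟨m', h2.symm⟩
    simp [this]

lemma Bk1 : Bk 1 * (1 - X ^ 2) = 1 := by
  ext n
  rw [mul_sub, mul_one, map_sub, PowerSeries.coeff_mul_X_pow', coeff_Bk, PowerSeries.coeff_one,
    hs1_card]
  by_cases h2 : 2 ≤ n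
  · rw [if_pos h2, coeff_Bk, hs1_card, if_neg (by omega : ¬ n = 0)]
    by_cases hd : 2 ∣ n
    · rw [if_pos hd, if_pos (by omega : 2 ∣ n - 2)]; norm_num
    · rw [if_neg hd, if_neg (by omega : ¬ 2 ∣ n - 2)]; norm_num
  · rw [if_neg h2]
    match n, h2 with
    | 0, _ => norm_num
    | 1, _ => norm_num
    | (n+2), h2 => exact absurd (by omega) h2

lemma raiseFun_length {q : List ℤ} (hne : q ≠ []) :
    (raiseFun q).length = q.length + 1 := by
  obtain ⟨m, e, rfl⟩ : ∃ m e, q = m ++ [e] :=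
    ⟨q.dropLast, q.getLast hne, (List.dropLast_append_getLast hne).symm⟩
  rw [raiseFun_eq]
  simp

lemma comb_mem {q β : List ℤ} (hq : InH q) (hqm : 1 ≤ maxHeight q) (hβ : InH β)
    (hle : maxHeight β ≤ maxHeight q + 1) :
    InH (raiseFun q ++ β) ∧ maxHeight (raiseFun q ++ β) = maxHeight q + 1 ∧
      (raiseFun q ++ β).length = q.length + 1 + β.length := by
  have hne : q ≠ [] := by rintro rfl; simp at hqm
  obtain ⟨m, e, hq', he⟩ := dap_last (inH_dap hq hne)
  have hprime : IsPrimeDAP (raiseFun q) := raise_prime hq hne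
  have hmh : maxHeight (raiseFun q) = 1 + maxHeight q := by
    rw [hq']; exact mh_raise m e he
  have hlow : lowerFun (raiseFun q) = q := lower_raise hne
  have hsum : (raiseFun q).sum = 0 := hprime.1.2.2.1
  refine ⟨InH.prime hprime (by rw [hlow]; exact hq) hβ (by omega), ?_, ?_⟩
  · rw [mh_append, hsum, zero_add, hmh, max_eq_left (by omega)]
    omega
  · rw [List.length_append, raiseFun_length hne]

lemma decomp {γ : List ℤ} (hγ : InH γ) (hk : 2 ≤ maxHeight γ) :
    ∃ q β, InH q ∧ InH β ∧ q ≠ [] ∧ maxHeight q + 1 = maxHeight γ ∧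
      maxHeight β ≤ maxHeight γ ∧ γ = raiseFun q ++ β ∧
      γ.length = q.length + 1 + β.length := by
  cases hγ with
  | empty => simp at hk
  | @ud β hβ hle =>
      exfalso
      rw [mh_ud] at hle
      rw [mh_append, mh_ud] at hk
      have : [(1:ℤ), -1].sum = 0 := by simp
      rw [this, zero_add, max_eq_left hle] at hk
      omega
  | @prime α β hα hlow hβ hle =>
      have hsum : α.sum = 0 := hα.1.2.2.1
      have hmhγ : maxHeight (α ++ β) = maxHeight α := by
        rw [mh_append, hsum, zero_add, max_eq_left hle]
      have hraise : raiseFun (lowerFun α) = α := raise_lower hα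
      have hml : maxHeight (lowerFun α) + 1 = maxHeight α := mh_lower hα
      have hαne : α ≠ [] := hα.1.1
      have hqne : lowerFun α ≠ [] := by
        intro h
        rw [h] at hml
        simp at hml
        have := prime_mh_two hα
        omega
      refine ⟨lowerFun α, β, hlow, hβ, hqne, by omega, by omega, by rw [hraise], ?_⟩
      have := raiseFun_length hqne
      rw [hraise] at this
      rw [List.length_append, this]

lemma prime_prefix_not_lt {a1 b1 a2 b2 : List ℤ} (hp1 : IsPrimeDAP a1) (hp2 : IsPrimeDAP a2)
    (heq : a1 ++ b1 = a2 ++ b2) : ¬ a1.length < a2.length := by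
  intro hlt
  have h1 : (List.take a1.length (a1 ++ b1)).sum = a1.sum := by
    rw [List.take_left]
  have h2 : (List.take a1.length (a2 ++ b2)).sum = (List.take a1.length a2).sum := by
    rw [List.take_append_of_le_length (le_of_lt hlt)]
  have hpos := hp2.2.2 a1.length (List.length_pos_iff.mpr hp1.1.1) hlt
  rw [heq] at h1
  rw [h2, hp1.1.2.2.1] at h1
  omega

lemma comb_inj {q1 β1 q2 β2 : List ℤ} (h1 : InH q1) (hne1 : q1 ≠ []) (h2 : InH q2)
    (hne2 : q2 ≠ []) (heq : raiseFun q1 ++ β1 = raiseFun q2 ++ β2) :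
    q1 = q2 ∧ β1 = β2 := by
  have hp1 := raise_prime h1 hne1
  have hp2 := raise_prime h2 hne2
  have hlen : (raiseFun q1).length = (raiseFun q2).length :=
    le_antisymm (not_lt.mp (prime_prefix_not_lt hp2 hp1 heq.symm))
      (not_lt.mp (prime_prefix_not_lt hp1 hp2 heq))
  obtain ⟨ha, hb⟩ := List.append_inj heq hlen
  refine ⟨?_, hb⟩
  rw [← lower_raise hne1, ← lower_raise hne2, ha]

lemma count_main (k m : ℕ) :
    (HEset (m+1) (k+2)).ncard =
      ∑ ab ∈ Finset.HasAntidiagonal.antidiagonal m, (HEset ab.1 (k+1)).ncard * (HSset ab.2 (k+2)).ncard := by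
  classical
  set P : Finset (List ℤ × List ℤ) :=
    (Finset.HasAntidiagonal.antidiagonal m).biUnion
      (fun ab => ((finHE ab.1 (k+1)).toFinset ×ˢ (finHS ab.2 (k+2)).toFinset)) with hP
  have hmemP : ∀ z : List ℤ × List ℤ, z ∈ P ↔
      (InH z.1 ∧ maxHeight z.1 = ((k+1 : ℕ) : ℤ) ∧ InH z.2 ∧
        maxHeight z.2 ≤ ((k+2 : ℕ) : ℤ) ∧ z.1.length + z.2.length = m) := by
    intro z
    simp only [hP, Finset.mem_biUnion, Finset.HasAntidiagonal.mem_antidiagonal, Finset.mem_product,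
      Set.Finite.mem_toFinset]
    constructor
    · rintro ⟨ab, hab, ⟨h1, h2, h3⟩, h4, h5, h6⟩
      exact ⟨h1, h3, h4, h6, by omega⟩
    · rintro ⟨h1, h2, h3, h4, h5⟩
      exact ⟨(z.1.length, z.2.length), h5, ⟨h1, rfl, h2⟩, h3, rfl, h4⟩
  have hcard : P.card = ∑ ab ∈ Finset.HasAntidiagonal.antidiagonal m,
      (HEset ab.1 (k+1)).ncard * (HSset ab.2 (k+2)).ncard := by
    rw [hP, Finset.card_biUnion]
    · apply Finset.sum_congr rfl
      intro ab _
      rw [Finset.card_product, Set.ncard_eq_toFinset_card _ (finHE ab.1 (k+1)),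
        Set.ncard_eq_toFinset_card _ (finHS ab.2 (k+2))]
    · intro x _ y _ hxy
      rw [Function.onFun, Finset.disjoint_left]
      rintro z hz1 hz2
      rw [Finset.mem_product, Set.Finite.mem_toFinset, Set.Finite.mem_toFinset] at hz1 hz2
      exact hxy (Prod.ext (hz1.1.2.1.symm.trans hz2.1.2.1)
        (hz1.2.2.1.symm.trans hz2.2.2.1))
  rw [← hcard, Set.ncard_eq_toFinset_card _ (finHE (m+1) (k+2))]
  have himg : (finHE (m+1) (k+2)).toFinset = P.image (fun z => raiseFun z.1 ++ z.2) := by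
    ext γ
    rw [Set.Finite.mem_toFinset, Finset.mem_image]
    constructor
    · rintro ⟨h1, h2, h3⟩
      obtain ⟨q, β, hq, hβ, hqne, hmq, hmβ, hdec, hlen⟩ :=
        decomp h1 (by rw [h3]; push_cast; omega)
      refine ⟨(q, β), ?_, hdec.symm⟩
      rw [hmemP]
      push_cast at h3 ⊢
      refine ⟨hq, by omega, hβ, by omega, by omega⟩
    · rintro ⟨z, hz, rfl⟩
      rw [hmemP] at hz
      obtain ⟨h1, h2, h3, h4, h5⟩ := hz
      push_cast at h2 h4
      obtain ⟨hInH, hmh, hlen⟩ :=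
        comb_mem h1 (by omega) h3 (by omega)
      refine ⟨hInH, by omega, by rw [hmh, h2]; push_cast; ring⟩
  rw [himg, Finset.card_image_of_injOn]
  intro z1 hz1 z2 hz2 heq
  rw [Finset.mem_coe, hmemP] at hz1 hz2
  have hne1 : z1.1 ≠ [] := by
    intro h
    have := hz1.2.1
    rw [h] at this
    simp at this
    omega
  have hne2 : z2.1 ≠ [] := by
    intro h
    have := hz2.2.1
    rw [h] at this
    simp at this
    omega
  obtain ⟨hqe, hbe⟩ := comb_inj hz1.1 hne1 hz2.1 hne2 heq
  exact Prod.ext hqe hbe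

lemma hs_split_q (n k : ℕ) :
    ((HSset n (k+1)).ncard : ℚ) - ((HSset n k).ncard : ℚ) = ((HEset n (k+1)).ncard : ℚ) := by
  have h := hs_split n k
  rw [h]
  push_cast
  ring

lemma BkRec (k : ℕ) :
    Bk (k+2) - Bk (k+1) = X * ((Bk (k+1) - Bk k) * Bk (k+2)) := by
  ext n
  rw [map_sub, coeff_Bk, coeff_Bk, hs_split_q n (k+1)]
  cases n with
  | zero =>
      rw [PowerSeries.coeff_zero_X_mul]
      have hE : HEset 0 (k+2) = ∅ := by
        ext p
        simp only [HEset, Set.mem_setOf_eq, Set.mem_empty_iff_false, iff_false]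
        rintro ⟨h1, h2, h3⟩
        rw [List.length_eq_zero_iff] at h2
        subst h2
        rw [mh_nil] at h3
        push_cast at h3
        omega
      rw [hE]
      simp
  | succ m =>
      rw [PowerSeries.coeff_succ_X_mul, PowerSeries.coeff_mul, count_main k m]
      push_cast
      apply Finset.sum_congr rfl
      intro ab _
      rw [map_sub, coeff_Bk, coeff_Bk, coeff_Bk, hs_split_q ab.1 k]

/-- `B_0 = 1`, `B_1 = 1/(1-x²)`, and for all `k ≥ 1`,
`B_{k-1} = ((1 - x³ + x)B_k - 1)/(x² B_k + x)` (stated with the denominator cleared). -/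
theorem stmt17 :
    Bk 0 = 1 ∧ Bk 1 * (1 - X ^ 2) = 1 ∧
    ∀ k : ℕ, 1 ≤ k →
      Bk (k - 1) * (X ^ 2 * Bk k + X) = (1 - X ^ 3 + X) * Bk k - 1 := by
  refine ⟨Bk0, Bk1, ?_⟩
  intro k hk
  induction k, hk using Nat.le_induction with
  | base =>
      simp only [Nat.sub_self, Bk0, one_mul]
      linear_combination (-(1:PowerSeries ℚ) - X) * Bk1
  | succ k hk ih =>
      obtain ⟨j, rfl⟩ : ∃ j, k = j + 1 := ⟨k - 1, by omega⟩
      simp only [Nat.add_sub_cancel] at ih ⊢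
      have hrec := BkRec j
      have hu : (1 - X * (Bk (j+1) - Bk j)) ≠ 0 := by
        intro h
        have := congrArg (PowerSeries.constantCoeff (R := ℚ)) h
        simp [PowerSeries.constantCoeff_X] at this
      have key : (Bk (j+1) * (X ^ 2 * Bk (j+2) + X) - ((1 - X ^ 3 + X) * Bk (j+2) - 1)) *
          (1 - X * (Bk (j+1) - Bk j)) = 0 := by
        linear_combination ih + (X^2 * Bk (j+1) - (1 - X^3 + X)) * hrec
      rcases mul_eq_zero.mp key with h | h
      · have := sub_eq_zero.mp h
        convert this using 2 <;> norm_num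
      · exact absurd h hu
end
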